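/- arXiv:2002.01921 — 5 statements merged into one kernel-verified Lean document; each statement's English description precedes it below -/
import Mathlib

section
/- For every point x ∈ E and every index j of a negative support vector, the score function is bounded above by the upper-bound function: F(x) ≤ U_j(x). (Proposition 1 of the paper: the bound holds because k(x, x⁺ i) ≤ k(x, x⁺_*) for every i, where x⁺_* is the positive support vector closest to x, and because the full negative sum dominates any single negative term.) -/
open scoped BigOperators

/-- Proposition 1: the score `F` is bounded above by `U_j` for any negative support
vector index `j`. -/
theorem score_le_upper_bound
    (d Mp Mm : ℕ) (hd : 0 < d) (hMp : 0 < Mp) (hMm : 0 < Mm)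
    (η γ : ℝ) (hη : 0 < η) (hγ : 0 < γ)
    (xp : Fin Mp → EuclideanSpace ℝ (Fin d)) (αp : Fin Mp → ℝ) (hαp : ∀ i, 0 < αp i)
    (xm : Fin Mm → EuclideanSpace ℝ (Fin d)) (αm : Fin Mm → ℝ) (hαm : ∀ j, 0 < αm j)
    (k : EuclideanSpace ℝ (Fin d) → EuclideanSpace ℝ (Fin d) → ℝ)
    (hk : ∀ x y, k x y = η * Real.exp (-γ * ‖x - y‖ ^ 2))
    (F : EuclideanSpace ℝ (Fin d) → ℝ)
    (hF : ∀ x, F x = (∑ i, αp i * k (xp i) x) - (∑ j, αm j * k (xm j) x))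
    (j : Fin Mm)
    (U : EuclideanSpace ℝ (Fin d) → ℝ)
    (hU : ∀ x, U x =
      η * Real.exp (-γ * ⨅ i, ‖x - xp i‖ ^ 2) * (∑ i, αp i) - αm j * k x (xm j)) :
    ∀ x, F x ≤ U x := by
  intro x
  have hne : Nonempty (Fin Mp) := ⟨⟨0, hMp⟩⟩
  rw [hF, hU]
  have h1 : (∑ i, αp i * k (xp i) x)
      ≤ η * Real.exp (-γ * ⨅ i, ‖x - xp i‖ ^ 2) * (∑ i, αp i) := by
    rw [Finset.mul_sum]
    apply Finset.sum_le_sum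
    intro i _
    rw [hk, mul_comm (αp i)]
    apply mul_le_mul_of_nonneg_right _ (le_of_lt (hαp i))
    apply mul_le_mul_of_nonneg_left _ (le_of_lt hη)
    apply Real.exp_le_exp.2
    have hle : (⨅ i, ‖x - xp i‖ ^ 2) ≤ ‖x - xp i‖ ^ 2 :=
      ciInf_le (Set.Finite.bddBelow (Set.finite_range _)) i
    have : ‖xp i - x‖ = ‖x - xp i‖ := norm_sub_rev _ _
    rw [this]
    nlinarith
  have h2 : αm j * k x (xm j) ≤ ∑ j', αm j' * k (xm j') x := by
    have hsym : k x (xm j) = k (xm j) x := by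
      rw [hk, hk, norm_sub_rev]
    rw [hsym]
    exact Finset.single_le_sum (f := fun j' => αm j' * k (xm j') x)
      (fun j' _ => mul_nonneg (hαm j').le (by rw [hk]; positivity))
      (Finset.mem_univ j)
  linarith
end

section
/- (Proposition 2, with corrected signs.) Fix an index j of a negative support vector and a ray s(t) = s₀ + t • v in E with U_j(s₀) < 0. For each index i define ρ(s₀, x⁺ i, x⁻ j) = +∞ (in the extended reals) if ⟪v, x⁺ i − x⁻ j⟫ ≤ 0, and ρ(s₀, x⁺ i, x⁻ j) = (β_j − ‖s₀ − x⁻ j‖² + ‖s₀ − x⁺ i‖²) / (2 * ⟪v, x⁺ i − x⁻ j⟫) if ⟪v, x⁺ i − x⁻ j⟫ > 0. Then for every real t with 0 ≤ t and t < t_u := min over i of ρ(s₀, x⁺ i, x⁻ j), the point s₀ + t • v is free, i.e., F(s₀ + t • v) < 0. -/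
open scoped BigOperators RealInnerProductSpace

private lemma exp_mul_lt_exp_mul (A B x y : ℝ) (hA : 0 < A) (hB : 0 < B) :
    A * Real.exp x < B * Real.exp y ↔ Real.log A + x < Real.log B + y := by
  have h1 : A * Real.exp x = Real.exp (Real.log A + x) := by
    rw [Real.exp_add, Real.exp_log hA]
  have h2 : B * Real.exp y = Real.exp (Real.log B + y) := by
    rw [Real.exp_add, Real.exp_log hB]
  rw [h1, h2, Real.exp_lt_exp]

/-- Proposition 2 (corrected signs): along a ray `s(t) = s₀ + t • v` starting at a
point with `U_j(s₀) < 0`, every point with `0 ≤ t < t_u := min_i ρ(s₀, x⁺ i, x⁻ j)`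
is free, i.e. `F(s₀ + t • v) < 0`. -/
theorem ray_free_before_tu
    (d Mp Mm : ℕ) (hd : 0 < d) (hMp : 0 < Mp) (hMm : 0 < Mm)
    (η γ : ℝ) (hη : 0 < η) (hγ : 0 < γ)
    (xp : Fin Mp → EuclideanSpace ℝ (Fin d)) (αp : Fin Mp → ℝ) (hαp : ∀ i, 0 < αp i)
    (xm : Fin Mm → EuclideanSpace ℝ (Fin d)) (αm : Fin Mm → ℝ) (hαm : ∀ j, 0 < αm j)
    (k : EuclideanSpace ℝ (Fin d) → EuclideanSpace ℝ (Fin d) → ℝ)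
    (hk : ∀ x y, k x y = η * Real.exp (-γ * ‖x - y‖ ^ 2))
    (F : EuclideanSpace ℝ (Fin d) → ℝ)
    (hF : ∀ x, F x = (∑ i, αp i * k (xp i) x) - (∑ j, αm j * k (xm j) x))
    (j : Fin Mm)
    (U : EuclideanSpace ℝ (Fin d) → ℝ)
    (hU : ∀ x, U x =
      η * Real.exp (-γ * ⨅ i, ‖x - xp i‖ ^ 2) * (∑ i, αp i) - αm j * k x (xm j))
    (β : ℝ)
    (hβ : β = (1 / γ) * (Real.log (αm j) - Real.log (∑ i, αp i)))
    (s₀ v : EuclideanSpace ℝ (Fin d))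
    (hU0 : U s₀ < 0)
    (ρ : Fin Mp → EReal)
    (hρ : ∀ i, ρ i =
      if ⟪v, xp i - xm j⟫ ≤ 0 then (⊤ : EReal)
      else (((β - ‖s₀ - xm j‖ ^ 2 + ‖s₀ - xp i‖ ^ 2) /
              (2 * ⟪v, xp i - xm j⟫) : ℝ) : EReal)) :
    ∀ t : ℝ, 0 ≤ t → (t : EReal) < ⨅ i, ρ i → F (s₀ + t • v) < 0 := by
  intro t ht0 htu
  haveI hne : Nonempty (Fin Mp) := ⟨⟨0, hMp⟩⟩
  set s := s₀ + t • v with hs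
  set A := ∑ i, αp i with hAdef
  have hA : 0 < A := Finset.sum_pos (fun i _ => hαp i) Finset.univ_nonempty
  have hβγ : γ * β = Real.log (αm j) - Real.log A := by
    rw [hβ]; field_simp
  set b := ‖s₀ - xm j‖ ^ 2 with hbdef
  set m := ⨅ i, ‖s₀ - xp i‖ ^ 2 with hm
  have hbdd : BddBelow (Set.range fun i => ‖s₀ - xp i‖ ^ 2) :=
    (Set.finite_range _).bddBelow
  have hmle : ∀ i, m ≤ ‖s₀ - xp i‖ ^ 2 := fun i => ciInf_le hbdd i
  -- from hU0
  have h0 : η * Real.exp (-γ * m) * A < αm j * (η * Real.exp (-γ * b)) := by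
    have h := hU0
    rw [hU s₀, hk s₀ (xm j)] at h
    linarith
  have h0' : (η * A) * Real.exp (-γ * m) < (αm j * η) * Real.exp (-γ * b) := by
    have e1 : (η * A) * Real.exp (-γ * m) = η * Real.exp (-γ * m) * A := by ring
    have e2 : (αm j * η) * Real.exp (-γ * b) = αm j * (η * Real.exp (-γ * b)) := by ring
    rw [e1, e2]; exact h0
  have hlog := (exp_mul_lt_exp_mul _ _ _ _ (mul_pos hη hA) (mul_pos (hαm j) hη)).mp h0'
  rw [Real.log_mul (ne_of_gt hη) (ne_of_gt hA),
      Real.log_mul (ne_of_gt (hαm j)) (ne_of_gt hη)] at hlog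
  have h2 : b - m < β := by
    have hmul : γ * (b - m) < γ * β := by nlinarith [hlog, hβγ]
    exact lt_of_mul_lt_mul_left hmul (le_of_lt hγ)
  have hpos : ∀ i, b - ‖s₀ - xp i‖ ^ 2 < β := fun i => by
    have := hmle i; linarith
  -- norm expansion along the ray
  have hexp : ∀ a : EuclideanSpace ℝ (Fin d),
      ‖s - a‖ ^ 2 = ‖s₀ - a‖ ^ 2 + 2 * t * ⟪v, s₀ - a⟫ + t ^ 2 * ‖v‖ ^ 2 := by
    intro a
    have hsa : s - a = (s₀ - a) + t • v := by rw [hs]; abel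
    rw [hsa, norm_add_sq_real, real_inner_smul_right, real_inner_comm, norm_smul]
    simp [mul_pow, sq_abs]
    ring
  -- per-index key inequality on squared distances
  have claim : ∀ i, ‖s - xm j‖ ^ 2 - ‖s - xp i‖ ^ 2 < β := by
    intro i
    have hdiff : ‖s - xm j‖ ^ 2 - ‖s - xp i‖ ^ 2
        = b - ‖s₀ - xp i‖ ^ 2 + 2 * t * ⟪v, xp i - xm j⟫ := by
      rw [hexp (xm j), hexp (xp i)]
      have hin : ⟪v, xp i - xm j⟫ = ⟪v, s₀ - xm j⟫ - ⟪v, s₀ - xp i⟫ := by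
        rw [← inner_sub_right]; congr 1; abel
      rw [hin, hbdef]; ring
    have hti : (t : EReal) < ρ i := lt_of_lt_of_le htu (iInf_le _ i)
    rw [hρ i] at hti
    by_cases hin : ⟪v, xp i - xm j⟫ ≤ 0
    · have hnp : 2 * t * ⟪v, xp i - xm j⟫ ≤ 0 :=
        mul_nonpos_of_nonneg_of_nonpos (by linarith) hin
      rw [hdiff]; linarith [hpos i]
    · push_neg at hin
      rw [if_neg (not_le.mpr hin)] at hti
      have ht' : t < (β - b + ‖s₀ - xp i‖ ^ 2) / (2 * ⟪v, xp i - xm j⟫) := by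
        exact_mod_cast hti
      have h2in : (0 : ℝ) < 2 * ⟪v, xp i - xm j⟫ := by linarith
      rw [lt_div_iff₀ h2in] at ht'
      rw [hdiff]; nlinarith [ht']
  -- key exponential inequality at s
  have hkey : ∀ i, A * Real.exp (-γ * ‖s - xp i‖ ^ 2)
      < αm j * Real.exp (-γ * ‖s - xm j‖ ^ 2) := by
    intro i
    rw [exp_mul_lt_exp_mul _ _ _ _ hA (hαm j)]
    nlinarith [mul_lt_mul_of_pos_left (claim i) hγ, hβγ]
  have hC : αm j * k (xm j) s = αm j * (η * Real.exp (-γ * ‖s - xm j‖ ^ 2)) := by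
    rw [hk, norm_sub_rev]
  have hlt : ∀ i ∈ Finset.univ, αp i * k (xp i) s
      < (αp i / A) * (αm j * k (xm j) s) := by
    intro i _
    rw [hC, hk, norm_sub_rev (xp i) s, div_mul_eq_mul_div, lt_div_iff₀ hA]
    nlinarith [mul_lt_mul_of_pos_left (hkey i) (mul_pos hη (hαp i))]
  have hsum : ∑ i, αp i * k (xp i) s < αm j * k (xm j) s := by
    calc ∑ i, αp i * k (xp i) s
        < ∑ i, (αp i / A) * (αm j * k (xm j) s) :=
          Finset.sum_lt_sum_of_nonempty Finset.univ_nonempty hlt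
      _ = (∑ i, αp i / A) * (αm j * k (xm j) s) := by rw [← Finset.sum_mul]
      _ = (A / A) * (αm j * k (xm j) s) := by rw [← Finset.sum_div]
      _ = αm j * k (xm j) s := by rw [div_self (ne_of_gt hA), one_mul]
  have hneg : αm j * k (xm j) s ≤ ∑ j', αm j' * k (xm j') s :=
    Finset.single_le_sum (f := fun j' => αm j' * k (xm j') s)
      (fun j' _ => le_of_lt (mul_pos (hαm j') (by rw [hk]; positivity)))
      (Finset.mem_univ j)
  rw [hF]
  linarith
end

section
/- (Corollary 1, with corrected signs.) Let s₀, v ∈ E. For indices i, j set c_{ij} = ⟪v, x⁺ i − x⁻ j⟫ and A_{ij} = ‖s₀ − x⁻ j‖² − ‖s₀ − x⁺ i‖², and define ρ_{ij} (in the extended reals) by: ρ_{ij} = (β_j − A_{ij}) / (2 * c_{ij}) if c_{ij} > 0; ρ_{ij} = +∞ if c_{ij} ≤ 0 and A_{ij} < β_j; and ρ_{ij} = 0 if c_{ij} ≤ 0 and A_{ij} ≥ β_j. Then for every real t with 0 ≤ t and t < t_u* := min over i of (max over j of ρ_{ij}), the point s₀ + t • v is free, i.e., F(s₀ + t • v)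 < 0. -/
open scoped BigOperators RealInnerProductSpace

/-- Corollary 1 (corrected signs): along the ray `s(t) = s₀ + t • v`, every point with
`0 ≤ t < t_u* := min_i max_j ρ_{ij}` is free, i.e. `F(s₀ + t • v) < 0`. -/
theorem ray_free_before_tu_star
    (d Mp Mm : ℕ) (hd : 0 < d) (hMp : 0 < Mp) (hMm : 0 < Mm)
    (η γ : ℝ) (hη : 0 < η) (hγ : 0 < γ)
    (xp : Fin Mp → EuclideanSpace ℝ (Fin d)) (αp : Fin Mp → ℝ) (hαp : ∀ i, 0 < αp i)
    (xm : Fin Mm → EuclideanSpace ℝ (Fin d)) (αm : Fin Mm → ℝ) (hαm : ∀ j, 0 < αm j)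
    (k : EuclideanSpace ℝ (Fin d) → EuclideanSpace ℝ (Fin d) → ℝ)
    (hk : ∀ x y, k x y = η * Real.exp (-γ * ‖x - y‖ ^ 2))
    (F : EuclideanSpace ℝ (Fin d) → ℝ)
    (hF : ∀ x, F x = (∑ i, αp i * k (xp i) x) - (∑ j, αm j * k (xm j) x))
    (β : Fin Mm → ℝ)
    (hβ : ∀ j, β j = (1 / γ) * (Real.log (αm j) - Real.log (∑ i, αp i)))
    (s₀ v : EuclideanSpace ℝ (Fin d))
    (c A : Fin Mp → Fin Mm → ℝ)
    (hc : ∀ i j, c i j = ⟪v, xp i - xm j⟫)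
    (hA : ∀ i j, A i j = ‖s₀ - xm j‖ ^ 2 - ‖s₀ - xp i‖ ^ 2)
    (ρ : Fin Mp → Fin Mm → EReal)
    (hρ : ∀ i j, ρ i j =
      if 0 < c i j then (((β j - A i j) / (2 * c i j) : ℝ) : EReal)
      else if A i j < β j then (⊤ : EReal)
      else (0 : EReal)) :
    ∀ t : ℝ, 0 ≤ t → (t : EReal) < ⨅ i, ⨆ j, ρ i j → F (s₀ + t • v) < 0 := by

  intro t ht htlt
  haveI : Nonempty (Fin Mp) := Fin.pos_iff_nonempty.mp hMp
  set s := s₀ + t • v with hs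
  have hSp : 0 < ∑ i, αp i :=
    Finset.sum_pos (fun i _ => hαp i) Finset.univ_nonempty
  have hkpos : ∀ x y : EuclideanSpace ℝ (Fin d), 0 < k x y := by
    intro x y; rw [hk]; positivity
  -- norm expansion along the ray
  have hexp : ∀ x : EuclideanSpace ℝ (Fin d),
      ‖s - x‖ ^ 2 = ‖s₀ - x‖ ^ 2 + 2 * t * ⟪v, s₀ - x⟫ + t ^ 2 * ‖v‖ ^ 2 := by
    intro x
    have h1 : s - x = (s₀ - x) + t • v := by rw [hs]; abel
    rw [h1, norm_add_sq_real, real_inner_smul_right, norm_smul]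
    rw [real_inner_comm]
    simp [mul_pow]
    ring
  have key : ∀ i, ∃ j, (∑ i, αp i) * k (xp i) s < αm j * k (xm j) s := by
    intro i
    have h1 : (t : EReal) < ⨆ j, ρ i j := lt_of_lt_of_le htlt (iInf_le _ i)
    obtain ⟨j, hj⟩ := lt_iSup_iff.mp h1
    refine ⟨j, ?_⟩
    have hlt : A i j + 2 * t * c i j < β j := by
      rw [hρ] at hj
      by_cases hcij : 0 < c i j
      · rw [if_pos hcij] at hj
        have h2 : t < (β j - A i j) / (2 * c i j) := EReal.coe_lt_coe_iff.mp hj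
        have h2c : (0:ℝ) < 2 * c i j := by linarith
        have := (lt_div_iff₀ h2c).mp h2
        nlinarith
      · rw [if_neg hcij] at hj
        push_neg at hcij
        by_cases hAβ : A i j < β j
        · nlinarith
        · rw [if_neg hAβ] at hj
          exfalso
          have h0 : (t : EReal) < ((0:ℝ) : EReal) := by
            simpa using hj
          exact absurd (EReal.coe_lt_coe_iff.mp h0) (not_lt.mpr ht)
    -- distance difference bound
    have hdd : ‖s - xm j‖ ^ 2 - ‖s - xp i‖ ^ 2 < β j := by
      rw [hexp, hexp]
      have hcc : ⟪v, s₀ - xm j⟫ - ⟪v, s₀ - xp i⟫ = c i j := by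
        rw [hc]
        rw [← inner_sub_right]
        congr 1
        abel
      have hAA := hA i j
      nlinarith [hcc]
    -- exponential comparison
    rw [hk, hk]
    have hlog : Real.log (∑ i, αp i) + (-γ * ‖s - xp i‖ ^ 2)
        < Real.log (αm j) + (-γ * ‖s - xm j‖ ^ 2) := by
      have hβj := hβ j
      have hγne : γ ≠ 0 := ne_of_gt hγ
      have : γ * (‖s - xm j‖ ^ 2 - ‖s - xp i‖ ^ 2) < γ * β j :=
        (mul_lt_mul_iff_right₀ hγ).mpr hdd
      rw [hβj] at this
      field_simp at this
      nlinarith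
    have h3 : (∑ i, αp i) * Real.exp (-γ * ‖s - xp i‖ ^ 2)
        < αm j * Real.exp (-γ * ‖s - xm j‖ ^ 2) := by
      have e1 : (∑ i, αp i) * Real.exp (-γ * ‖s - xp i‖ ^ 2)
          = Real.exp (Real.log (∑ i, αp i) + (-γ * ‖s - xp i‖ ^ 2)) := by
        rw [Real.exp_add, Real.exp_log hSp]
      have e2 : αm j * Real.exp (-γ * ‖s - xm j‖ ^ 2)
          = Real.exp (Real.log (αm j) + (-γ * ‖s - xm j‖ ^ 2)) := by
        rw [Real.exp_add, Real.exp_log (hαm j)]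
      rw [e1, e2]
      exact Real.exp_lt_exp.mpr hlog
    calc (∑ i, αp i) * (η * Real.exp (-γ * ‖xp i - s‖ ^ 2))
        = η * ((∑ i, αp i) * Real.exp (-γ * ‖s - xp i‖ ^ 2)) := by
          rw [norm_sub_rev]; ring
      _ < η * (αm j * Real.exp (-γ * ‖s - xm j‖ ^ 2)) := by
          exact (mul_lt_mul_iff_right₀ hη).mpr h3
      _ = αm j * (η * Real.exp (-γ * ‖xm j - s‖ ^ 2)) := by
          rw [norm_sub_rev]; ring
  choose jf hjf using key
  set RHS := ∑ j, αm j * k (xm j) s with hRHS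
  have hle : ∀ i, αm (jf i) * k (xm (jf i)) s ≤ RHS := by
    intro i
    exact Finset.single_le_sum
      (fun j _ => le_of_lt (mul_pos (hαm j) (hkpos _ _))) (Finset.mem_univ _)
  have hi : ∀ i, αp i * k (xp i) s < αp i / (∑ i, αp i) * RHS := by
    intro i
    have h1 : (∑ i, αp i) * k (xp i) s < RHS := lt_of_lt_of_le (hjf i) (hle i)
    have hpi := hαp i
    rw [div_mul_eq_mul_div, lt_div_iff₀ hSp]
    nlinarith
  have hsum : ∑ i, αp i * k (xp i) s < ∑ i, αp i / (∑ i, αp i) * RHS :=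
    Finset.sum_lt_sum_of_nonempty Finset.univ_nonempty (fun i _ => hi i)
  have heq : ∑ i, αp i / (∑ i, αp i) * RHS = RHS := by
    rw [← Finset.sum_mul, ← Finset.sum_div]
    field_simp
  rw [hF]
  rw [heq] at hsum
  linarith
end

section
/- (Corollary 2, fixed negative support vector.) Fix an index j and a point s₀ ∈ E with U_j(s₀) < 0, and assume x⁺ i ≠ x⁻ j for every i. Define r_u = min over i of ρ̄(s₀, x⁺ i, x⁻ j), where ρ̄(s₀, x⁺ i, x⁻ j) = (β_j − ‖s₀ − x⁻ j‖² + ‖s₀ − x⁺ i‖²) / (2 * ‖x⁻ j − x⁺ i‖). Then every point in the open Euclidean ball of radius r_u around s₀ is free: for all x ∈ E with ‖x − s₀‖ < r_u, F(x) < 0. -/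
/-!
For each positive support vector `x⁺ i`, the inequality
`‖x - x⁻ j‖² - ‖x - x⁺ i‖² < β` says exactly that `(∑ α⁺) k(x⁺ i, x) < α⁻ j k(x⁻ j, x)`.
Its left side is affine in `x` with slope `2 (x⁺ i - x⁻ j)`, so by Cauchy–Schwarz it persists
on the ball of radius `ρ̄(s₀, x⁺ i, x⁻ j)` around `s₀`. On the ball of radius `r_u` it therefore
holds for every `i`, and averaging over `i` with the weights `α⁺ i` gives
`∑ α⁺ i k(x⁺ i, x) < α⁻ j k(x⁻ j, x) ≤ ∑ α⁻ j' k(x⁻ j', x)`.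
-/

open Real

section InnerProductSpace

variable {E : Type*} [NormedAddCommGroup E] [InnerProductSpace ℝ E]

theorem norm_sub_sq_sub_norm_sub_sq_le (x s p q : E) :
    ‖x - q‖ ^ 2 - ‖x - p‖ ^ 2 ≤ ‖s - q‖ ^ 2 - ‖s - p‖ ^ 2 + 2 * (‖q - p‖ * ‖x - s‖) := by
  have hpolar : ‖x - q‖ ^ 2 - ‖x - p‖ ^ 2
      = ‖s - q‖ ^ 2 - ‖s - p‖ ^ 2 + 2 * inner ℝ (p - q) (x - s) := by
    simp only [norm_sub_sq_real, inner_sub_left, inner_sub_right, real_inner_comm]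
    ring
  have hcs : inner ℝ (p - q) (x - s) ≤ ‖q - p‖ * ‖x - s‖ :=
    norm_sub_rev q p ▸ real_inner_le_norm _ _
  linarith

theorem norm_sub_sq_sub_norm_sub_sq_lt {β : ℝ} {x s p q : E} (hpq : p ≠ q)
    (hx : ‖x - s‖ < (β - ‖s - q‖ ^ 2 + ‖s - p‖ ^ 2) / (2 * ‖q - p‖)) :
    ‖x - q‖ ^ 2 - ‖x - p‖ ^ 2 < β := by
  have hqp : 0 < 2 * ‖q - p‖ := by
    have := norm_pos_iff.2 (sub_ne_zero.2 hpq.symm)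
    positivity
  rw [lt_div_iff₀ hqp] at hx
  linarith [norm_sub_sq_sub_norm_sub_sq_le x s p q]

end InnerProductSpace

theorem mul_exp_neg_mul_lt_mul_exp_neg_mul_iff {a c γ u v : ℝ} (ha : 0 < a) (hc : 0 < c)
    (hγ : 0 < γ) :
    a * exp (-γ * u) < c * exp (-γ * v) ↔ v - u < 1 / γ * (log c - log a) := by
  rw [← exp_log ha, ← exp_log hc, ← exp_add, ← exp_add, exp_lt_exp, log_exp, log_exp,
    one_div_mul_eq_div, lt_div_iff₀ hγ]
  constructor <;> intro h <;> linarith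

theorem ball_free_ru_general
    (d Mp Mm : ℕ) (hMp : 0 < Mp)
    (η γ : ℝ) (hη : 0 < η) (hγ : 0 < γ)
    (xp : Fin Mp → EuclideanSpace ℝ (Fin d)) (αp : Fin Mp → ℝ) (hαp : ∀ i, 0 < αp i)
    (xm : Fin Mm → EuclideanSpace ℝ (Fin d)) (αm : Fin Mm → ℝ) (hαm : ∀ j, 0 < αm j)
    (k : EuclideanSpace ℝ (Fin d) → EuclideanSpace ℝ (Fin d) → ℝ)
    (hk : ∀ x y, k x y = η * Real.exp (-γ * ‖x - y‖ ^ 2))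
    (F : EuclideanSpace ℝ (Fin d) → ℝ)
    (hF : ∀ x, F x = (∑ i, αp i * k (xp i) x) - (∑ j, αm j * k (xm j) x))
    (j : Fin Mm)
    (β : ℝ)
    (hβ : β = (1 / γ) * (Real.log (αm j) - Real.log (∑ i, αp i)))
    (s₀ : EuclideanSpace ℝ (Fin d))
    (hne : ∀ i, xp i ≠ xm j)
    (ru : ℝ)
    (hru : ru = ⨅ i, (β - ‖s₀ - xm j‖ ^ 2 + ‖s₀ - xp i‖ ^ 2) / (2 * ‖xm j - xp i‖)) :
    ∀ x : EuclideanSpace ℝ (Fin d), ‖x - s₀‖ < ru → F x < 0 := by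
  intro x hx
  set S := ∑ i, αp i
  have hnonempty : (Finset.univ : Finset (Fin Mp)).Nonempty := Finset.univ_nonempty_iff.2 ⟨⟨0, hMp⟩⟩
  have hS : 0 < S := Finset.sum_pos (fun i _ => hαp i) hnonempty
  have hcloser : ∀ i, S * k (xp i) x < αm j * k (xm j) x := by
    intro i
    have hxi : ‖x - xm j‖ ^ 2 - ‖x - xp i‖ ^ 2 < β := norm_sub_sq_sub_norm_sub_sq_lt (hne i)
      (hx.trans_le (hru ▸ ciInf_le (Set.finite_range _).bddBelow i))
    rw [hβ, ← mul_exp_neg_mul_lt_mul_exp_neg_mul_iff hS (hαm j) hγ] at hxi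
    rw [hk, hk, norm_sub_rev (xp i), norm_sub_rev (xm j), mul_left_comm, mul_left_comm (αm j)]
    exact mul_lt_mul_of_pos_left hxi hη
  have hpositive : ∑ i, αp i * k (xp i) x < αm j * k (xm j) x :=
    calc ∑ i, αp i * k (xp i) x < ∑ i, αp i * (αm j * k (xm j) x / S) :=
          Finset.sum_lt_sum_of_nonempty hnonempty fun i _ =>
            mul_lt_mul_of_pos_left ((lt_div_iff₀' hS).2 (hcloser i)) (hαp i)
      _ = αm j * k (xm j) x := by rw [← Finset.sum_mul, mul_div_cancel₀ _ hS.ne']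
  have hnegative : αm j * k (xm j) x ≤ ∑ j', αm j' * k (xm j') x :=
    Finset.single_le_sum (f := fun j' => αm j' * k (xm j') x)
      (fun j' _ => by rw [hk]; have := hαm j'; positivity) (Finset.mem_univ j)
  rw [hF]
  linarith

/-- Corollary 2 (fixed negative support vector): every point of the open ball of radius
`r_u = min_i ρ̄(s₀, x⁺ i, x⁻ j)` around a point `s₀` with `U_j(s₀) < 0` is free. -/
theorem ball_free_ru
    (d Mp Mm : ℕ) (hd : 0 < d) (hMp : 0 < Mp) (hMm : 0 < Mm)
    (η γ : ℝ) (hη : 0 < η) (hγ : 0 < γ)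
    (xp : Fin Mp → EuclideanSpace ℝ (Fin d)) (αp : Fin Mp → ℝ) (hαp : ∀ i, 0 < αp i)
    (xm : Fin Mm → EuclideanSpace ℝ (Fin d)) (αm : Fin Mm → ℝ) (hαm : ∀ j, 0 < αm j)
    (k : EuclideanSpace ℝ (Fin d) → EuclideanSpace ℝ (Fin d) → ℝ)
    (hk : ∀ x y, k x y = η * Real.exp (-γ * ‖x - y‖ ^ 2))
    (F : EuclideanSpace ℝ (Fin d) → ℝ)
    (hF : ∀ x, F x = (∑ i, αp i * k (xp i) x) - (∑ j, αm j * k (xm j) x))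
    (j : Fin Mm)
    (U : EuclideanSpace ℝ (Fin d) → ℝ)
    (hU : ∀ x, U x =
      η * Real.exp (-γ * ⨅ i, ‖x - xp i‖ ^ 2) * (∑ i, αp i) - αm j * k x (xm j))
    (β : ℝ)
    (hβ : β = (1 / γ) * (Real.log (αm j) - Real.log (∑ i, αp i)))
    (s₀ : EuclideanSpace ℝ (Fin d))
    (hU0 : U s₀ < 0)
    (hne : ∀ i, xp i ≠ xm j)
    (ru : ℝ)
    (hru : ru = ⨅ i, (β - ‖s₀ - xm j‖ ^ 2 + ‖s₀ - xp i‖ ^ 2) / (2 * ‖xm j - xp i‖)) :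
    ∀ x : EuclideanSpace ℝ (Fin d), ‖x - s₀‖ < ru → F x < 0 :=
  ball_free_ru_general d Mp Mm hMp η γ hη hγ xp αp hαp xm αm hαm k hk F hF j β hβ s₀ hne ru hru
end

section
/- (Positivity of the numerators in Corollary 2.) Fix an index j and a point s₀ ∈ E. If U_j(s₀) < 0, then for every index i the numerator appearing in the safe-radius formula is strictly positive: β_j − ‖s₀ − x⁻ j‖² + ‖s₀ − x⁺ i‖² > 0. -/
open scoped BigOperators

/-- Positivity of the numerators in Corollary 2: if `U_j(s₀) < 0`, then for every
positive support vector index `i`, `β_j − ‖s₀ − x⁻ j‖² + ‖s₀ − x⁺ i‖² > 0`. -/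
theorem numerator_pos_of_upper_bound_neg
    (d Mp Mm : ℕ) (hd : 0 < d) (hMp : 0 < Mp) (hMm : 0 < Mm)
    (η γ : ℝ) (hη : 0 < η) (hγ : 0 < γ)
    (xp : Fin Mp → EuclideanSpace ℝ (Fin d)) (αp : Fin Mp → ℝ) (hαp : ∀ i, 0 < αp i)
    (xm : Fin Mm → EuclideanSpace ℝ (Fin d)) (αm : Fin Mm → ℝ) (hαm : ∀ j, 0 < αm j)
    (k : EuclideanSpace ℝ (Fin d) → EuclideanSpace ℝ (Fin d) → ℝ)
    (hk : ∀ x y, k x y = η * Real.exp (-γ * ‖x - y‖ ^ 2))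
    (j : Fin Mm)
    (U : EuclideanSpace ℝ (Fin d) → ℝ)
    (hU : ∀ x, U x =
      η * Real.exp (-γ * ⨅ i, ‖x - xp i‖ ^ 2) * (∑ i, αp i) - αm j * k x (xm j))
    (β : ℝ)
    (hβ : β = (1 / γ) * (Real.log (αm j) - Real.log (∑ i, αp i)))
    (s₀ : EuclideanSpace ℝ (Fin d))
    (hU0 : U s₀ < 0) :
    ∀ i : Fin Mp, 0 < β - ‖s₀ - xm j‖ ^ 2 + ‖s₀ - xp i‖ ^ 2 := by
  intro i
  haveI : Nonempty (Fin Mp) := ⟨⟨0, hMp⟩⟩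
  set S : ℝ := ∑ i, αp i with hS
  have hSpos : 0 < S := Finset.sum_pos (fun i _ => hαp i) Finset.univ_nonempty
  set A : ℝ := ‖s₀ - xp i‖ ^ 2 with hA
  set D : ℝ := ‖s₀ - xm j‖ ^ 2 with hD
  have hm : (⨅ i, ‖s₀ - xp i‖ ^ 2) ≤ A := by
    apply ciInf_le ⟨0, ?_⟩ i
    rintro x ⟨i, rfl⟩
    positivity
  have h1 : η * Real.exp (-γ * (⨅ i, ‖s₀ - xp i‖ ^ 2)) * S <
      αm j * (η * Real.exp (-γ * D)) := by
    have := hU0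
    rw [hU, hk] at this
    linarith
  have h2 : Real.exp (-γ * A) ≤ Real.exp (-γ * (⨅ i, ‖s₀ - xp i‖ ^ 2)) := by
    apply Real.exp_le_exp.2
    nlinarith
  have h3 : Real.exp (-γ * A) * S < αm j * Real.exp (-γ * D) := by
    have hηS : η * Real.exp (-γ * A) * S ≤ η * Real.exp (-γ * (⨅ i, ‖s₀ - xp i‖ ^ 2)) * S := by
      have := mul_le_mul_of_nonneg_left h2 hη.le
      exact mul_le_mul_of_nonneg_right this hSpos.le
    have : η * (Real.exp (-γ * A) * S) < η * (αm j * Real.exp (-γ * D)) := by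
      calc η * (Real.exp (-γ * A) * S) = η * Real.exp (-γ * A) * S := by ring
        _ ≤ η * Real.exp (-γ * (⨅ i, ‖s₀ - xp i‖ ^ 2)) * S := hηS
        _ < αm j * (η * Real.exp (-γ * D)) := h1
        _ = η * (αm j * Real.exp (-γ * D)) := by ring
    exact lt_of_mul_lt_mul_left this hη.le
  have h4 : Real.log (Real.exp (-γ * A) * S) < Real.log (αm j * Real.exp (-γ * D)) := by
    apply Real.log_lt_log _ h3
    positivity
  rw [Real.log_mul (Real.exp_pos _).ne' hSpos.ne', Real.log_exp,
      Real.log_mul (hαm j).ne' (Real.exp_pos _).ne', Real.log_exp] at h4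
  have hβeq : β * γ = Real.log (αm j) - Real.log S := by
    rw [hβ]; field_simp
  nlinarith [hγ]
end
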